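/- If r-1 divides k-1, then the r-uniform Ramsey number R(K_k^{(r)}, T) equals (k-1)t + 1 for every r-uniform hypertree T with t edges. -/

import Mathlib

/-!
Upper bound: a hypertree can be built edge by edge so that every new edge meets the earlier
ones in exactly one vertex, since two common vertices together with a Berge path through the
earlier edges would close a Berge cycle. Induct along this order. On `(k-1)(t+1)+1` vertices,
grow a red clique `X` one vertex at a time: embed the first `t` edges in blue outside `X`
(`(k-1)t+1` vertices remain), and look at the image `x` of the attachment vertex of the last
edge. Either `x` and `r-1` vertices outside the embedding span a blue edge, which completes a
blue copy of the tree, or all such `r`-sets are red, in particular those through `x` inside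
`X ∪ {x}`, so `X ∪ {x}` is a red clique. After `k` rounds `X` is a red `K_k`.

Lower bound: split `(k-1)t` vertices into `(k-1)/(r-1)` blocks of `(r-1)t` vertices and colour
an `r`-set red iff it meets two blocks. A red `K_k` has at most `r-1` vertices in each block,
so at most `k-1` vertices; a blue tree is connected, so it lies in one block, but it has
`(r-1)t+1` vertices.
-/

open Finset

structure FinHypergraph (V : Type*) where
  edges : Finset (Finset V)

namespace FinHypergraph

variable {V : Type*} [DecidableEq V]

/-- `H` is `r`-uniform: every edge has exactly `r` vertices. -/
def Uniform (H : FinHypergraph V) (r : ℕ) : Prop := ∀ e ∈ H.edges, e.card = r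

/-- Two vertices are adjacent if some edge contains both. -/
def adj (H : FinHypergraph V) (u w : V) : Prop := ∃ e ∈ H.edges, u ∈ e ∧ w ∈ e

/-- `H` is connected: any two vertices are joined by a walk. -/
def Connected (H : FinHypergraph V) : Prop := ∀ u w : V, Relation.ReflTransGen H.adj u w

/-- No two distinct edges intersect in more than one vertex. -/
def Linear (H : FinHypergraph V) : Prop :=
  ∀ e ∈ H.edges, ∀ f ∈ H.edges, e ≠ f → (e ∩ f).card ≤ 1

/-- A Berge cycle: distinct vertices `v 0, …, v (k-1)` and distinct edges
`e 0, …, e (k-1)`, `k ≥ 2`, with `{v i, v (i+1)} ⊆ e i` cyclically. -/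
def HasBergeCycle (H : FinHypergraph V) : Prop :=
  ∃ k : ℕ, ∃ _ : 2 ≤ k, ∃ (v : Fin k → V) (e : Fin k → Finset V),
    Function.Injective v ∧ Function.Injective e ∧
    (∀ i, e i ∈ H.edges) ∧
    (∀ i : Fin k, v i ∈ e i ∧ v ⟨(i.val + 1) % k, Nat.mod_lt _ (by omega)⟩ ∈ e i)

/-- A hypertree: connected, linear, with no Berge cycle. -/
def IsHypertree (H : FinHypergraph V) : Prop :=
  H.Connected ∧ H.Linear ∧ ¬ H.HasBergeCycle

/-- A proper coloring: no edge is monochromatic. -/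
def Proper (H : FinHypergraph V) {k : ℕ} (c : V → Fin k) : Prop :=
  ∀ e ∈ H.edges, ¬ ∀ u ∈ e, ∀ w ∈ e, c u = c w

/-- The chromatic number: least number of colors in a proper coloring. -/
noncomputable def chromaticNumber (H : FinHypergraph V) : ℕ :=
  sInf {k | ∃ c : V → Fin k, H.Proper c}

/-- `H` contains a copy of `T`: an injective vertex map sending edges to edges. -/
def ContainsCopy {W : Type*} [DecidableEq W] (H : FinHypergraph V) (T : FinHypergraph W) : Prop :=
  ∃ φ : W → V, Function.Injective φ ∧ ∀ e ∈ T.edges, e.image φ ∈ H.edges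

end FinHypergraph

/-- The complete `r`-uniform hypergraph on `Fin n`. -/
def completeHypergraph (n r : ℕ) : FinHypergraph (Fin n) :=
  ⟨Finset.univ.powersetCard r⟩

namespace FinHypergraph

open Function

variable {W : Type*}

structure IsBergePath (E : Finset (Finset W)) (a b : W) {m : ℕ} (v : Fin (m + 1) → W)
    (g : Fin m → Finset W) : Prop where
  injective_vertex : Injective v
  injective_edge : Injective g
  edge_mem : ∀ i, g i ∈ E
  vertex_mem_edge : ∀ i, v i.castSucc ∈ g i ∧ v i.succ ∈ g i
  vertex_zero : v 0 = a
  vertex_last : v (Fin.last m) = b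

def BergeJoined (E : Finset (Finset W)) (a b : W) : Prop :=
  ∃ (m : ℕ) (v : Fin (m + 1) → W) (g : Fin m → Finset W), IsBergePath E a b v g

variable {E E' : Finset (Finset W)} {a b c : W} {H : FinHypergraph W}

namespace IsBergePath

variable {m : ℕ} {v : Fin (m + 1) → W} {g : Fin m → Finset W}

lemma refl (E : Finset (Finset W)) (b : W) :
    IsBergePath E b b (fun _ : Fin 1 ↦ b) Fin.elim0 where
  injective_vertex i j _ := Subsingleton.elim (α := Fin 1) i j
  injective_edge := injective_of_subsingleton _
  edge_mem i := i.elim0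
  vertex_mem_edge i := i.elim0
  vertex_zero := rfl
  vertex_last := rfl

lemma reverse (h : IsBergePath E a b v g) :
    IsBergePath E b a (v ∘ Fin.rev) (g ∘ Fin.rev) where
  injective_vertex := h.injective_vertex.comp Fin.rev_injective
  injective_edge := h.injective_edge.comp Fin.rev_injective
  edge_mem i := h.edge_mem _
  vertex_mem_edge i := by
    simpa [Fin.rev_castSucc, Fin.rev_succ, and_comm] using h.vertex_mem_edge i.rev
  vertex_zero := by simpa using h.vertex_last
  vertex_last := by simpa using h.vertex_zero

lemma mono (h : IsBergePath E a b v g) (hE : E ⊆ E') : IsBergePath E' a b v g :=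
  { h with edge_mem := fun i ↦ hE (h.edge_mem i) }

lemma hasBergeCycle (h : IsBergePath E a b v g) (hE : E ⊆ H.edges) {f : Finset W}
    (hf : f ∈ H.edges) (hfE : f ∉ E) (ha : a ∈ f) (hb : b ∈ f) (hab : a ≠ b) :
    H.HasBergeCycle := by
  have hm : m ≠ 0 := by
    rintro rfl
    exact hab (h.vertex_zero.symm.trans h.vertex_last)
  refine ⟨m + 1, by omega, v, Fin.snoc g f, h.injective_vertex,
    Fin.snoc_injective_of_injective h.injective_edge ?_, fun i ↦ ?_, fun i ↦ ?_⟩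
  · rintro ⟨i, rfl⟩
    exact hfE (h.edge_mem i)
  · cases i using Fin.lastCases with
    | last => simpa using hf
    | cast j => simpa using hE (h.edge_mem j)
  · cases i using Fin.lastCases with
    | last =>
      have hnext : (⟨(m + 1) % (m + 1), Nat.mod_lt _ (by omega)⟩ : Fin (m + 1)) = 0 := by
        ext; simp
      simpa [hnext, h.vertex_last, h.vertex_zero] using ⟨hb, ha⟩
    | cast j =>
      have hnext :
          (⟨(j.val + 1) % (m + 1), Nat.mod_lt _ (by omega)⟩ : Fin (m + 1)) = j.succ := by
        ext; simp [Nat.mod_eq_of_lt (Nat.succ_lt_succ j.isLt)]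
      simpa [hnext] using h.vertex_mem_edge j

end IsBergePath

lemma BergeJoined.symm (h : BergeJoined E a b) : BergeJoined E b a :=
  let ⟨_, _, _, hp⟩ := h
  ⟨_, _, _, hp.reverse⟩

lemma BergeJoined.mono (h : BergeJoined E a b) (hE : E ⊆ E') : BergeJoined E' a b :=
  let ⟨_, _, _, hp⟩ := h
  ⟨_, _, _, hp.mono hE⟩

lemma Connected.mem_of_forall_adj (hH : H.Connected) {S : Set W} (ha : a ∈ S)
    (hS : ∀ u v, u ∈ S → H.adj u v → v ∈ S) (z : W) : z ∈ S := by
  induction hH a z with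
  | refl => exact ha
  | tail _ huv ih => exact hS _ _ ih huv

variable [DecidableEq W]

inductive PendantBuilt : Finset (Finset W) → Prop
  | single (e : Finset W) : PendantBuilt {e}
  | attach {E : Finset (Finset W)} {e : Finset W} {w : W} :
      PendantBuilt E → e ∉ E → e ∩ E.sup id = {w} → PendantBuilt (insert e E)

lemma PendantBuilt.nonempty (hE : PendantBuilt E) : E.Nonempty := by
  cases hE with
  | single e => exact singleton_nonempty e
  | attach => exact insert_nonempty _ _

lemma PendantBuilt.card_sup (hE : PendantBuilt E) {r : ℕ} (hr : r ≠ 0)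
    (hu : ∀ e ∈ E, e.card = r) : (E.sup id).card = (r - 1) * E.card + 1 := by
  induction hE with
  | single e =>
    simp only [sup_singleton, id, card_singleton, mul_one, hu e (mem_singleton_self e)]
    omega
  | @attach E e w hE he hw ih =>
    have h := card_union_add_card_inter e (E.sup id)
    rw [hw, card_singleton, ih fun f hf ↦ hu f (mem_insert_of_mem hf),
      hu e (mem_insert_self e E)] at h
    rw [sup_insert, id, sup_eq_union, card_insert_of_notMem he, Nat.mul_succ]
    omega

lemma IsBergePath.cons {m : ℕ} {v : Fin (m + 1) → W} {g : Fin m → Finset W} {e : Finset W}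
    (h : IsBergePath E c b v g) (ha : a ∈ e) (hc : c ∈ e) (hav : a ∉ Set.range v)
    (he : e ∉ E) : IsBergePath (insert e E) a b (Fin.cons a v) (Fin.cons e g) where
  injective_vertex := Fin.cons_injective_of_injective hav h.injective_vertex
  injective_edge := Fin.cons_injective_of_injective
    (by rintro ⟨i, rfl⟩; exact he (h.edge_mem i)) h.injective_edge
  edge_mem i := by
    cases i using Fin.cases with
    | zero => exact mem_insert_self e E
    | succ j => exact mem_insert_of_mem (h.edge_mem j)
  vertex_mem_edge i := by
    cases i using Fin.cases with
    | zero => simpa [h.vertex_zero] using ⟨ha, hc⟩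
    | succ j => simpa [← Fin.succ_castSucc] using h.vertex_mem_edge j
  vertex_zero := rfl
  vertex_last := h.vertex_last

lemma IsBergePath.vertex_mem_sup {m : ℕ} {v : Fin (m + 1) → W} {g : Fin m → Finset W}
    (h : IsBergePath E a b v g) (ha : a ∈ E.sup id) (i : Fin (m + 1)) : v i ∈ E.sup id := by
  cases i using Fin.cases with
  | zero => exact h.vertex_zero ▸ ha
  | succ j => exact mem_sup.2 ⟨g j, h.edge_mem j, (h.vertex_mem_edge j).2⟩

lemma BergeJoined.of_mem {e : Finset W} (he : e ∈ E) (ha : a ∈ e) (hb : b ∈ e) :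
    BergeJoined E a b := by
  rcases eq_or_ne a b with rfl | hab
  · exact ⟨0, _, _, IsBergePath.refl E a⟩
  · refine ⟨1, _, _, ((IsBergePath.refl ∅ b).cons ha hb ?_ (notMem_empty e)).mono ?_⟩
    · simpa using hab
    · simpa using he

lemma BergeJoined.cons {e : Finset W} (h : BergeJoined E c b) (hc : c ∈ E.sup id)
    (ha : a ∉ E.sup id) (hae : a ∈ e) (hce : c ∈ e) (he : e ∉ E) :
    BergeJoined (insert e E) a b := by
  obtain ⟨_, v, _, hp⟩ := h
  refine ⟨_, _, _, hp.cons hae hce ?_ he⟩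
  rintro ⟨i, rfl⟩
  exact ha (hp.vertex_mem_sup hc i)

lemma PendantBuilt.bergeJoined (hE : PendantBuilt E) (ha : a ∈ E.sup id) (hb : b ∈ E.sup id) :
    BergeJoined E a b := by
  induction hE generalizing a b with
  | single e =>
    simp only [sup_singleton, id] at ha hb
    exact .of_mem (mem_singleton_self e) ha hb
  | @attach E e w hE he hw ih =>
    obtain ⟨hwe, hwE⟩ := mem_inter.1 (hw ▸ mem_singleton_self w)
    have hnew : ∀ {a b}, a ∉ E.sup id → a ∈ e → b ∈ E.sup id →
        BergeJoined (insert e E) a b :=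
      fun ha hae hb ↦ (ih hwE hb).cons hwE ha hae hwe he
    simp only [sup_insert, id, sup_eq_union, mem_union] at ha hb
    by_cases haE : a ∈ E.sup id <;> by_cases hbE : b ∈ E.sup id
    · exact (ih haE hbE).mono (subset_insert e E)
    · exact (hnew hbE (hb.resolve_right hbE) haE).symm
    · exact hnew haE (ha.resolve_right haE) hbE
    · exact .of_mem (mem_insert_self e E) (ha.resolve_right haE) (hb.resolve_right hbE)

lemma Connected.mem_sup_edges (hH : H.Connected) (ha : a ∈ H.edges.sup id) (z : W) :
    z ∈ H.edges.sup id :=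
  hH.mem_of_forall_adj (S := {z | z ∈ H.edges.sup id}) ha
    (fun _ _ _ ⟨e, he, _, hve⟩ ↦ mem_sup.2 ⟨e, he, hve⟩) z

lemma Connected.exists_edge_inter_sup_nonempty (hH : H.Connected)
    (hne : ∀ f ∈ H.edges, f.Nonempty) (hE : E.Nonempty) (hEH : E ⊂ H.edges) :
    ∃ f ∈ H.edges, f ∉ E ∧ (f ∩ E.sup id).Nonempty := by
  by_contra! hdisj
  obtain ⟨g, hg, hgE⟩ := exists_of_ssubset hEH
  obtain ⟨e, he⟩ := hE
  obtain ⟨a, ha⟩ := hne e (hEH.subset he)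
  have hall : ∀ z, z ∈ E.sup id := by
    refine hH.mem_of_forall_adj (S := {z | z ∈ E.sup id}) (mem_sup.2 ⟨e, he, ha⟩) ?_
    rintro u v hu ⟨h, hh, huh, hvh⟩
    by_cases hhE : h ∈ E
    · exact mem_sup.2 ⟨h, hhE, hvh⟩
    · exact absurd (hdisj h hh hhE) (ne_empty_of_mem (mem_inter.2 ⟨huh, hu⟩))
  obtain ⟨b, hb⟩ := hne g hg
  exact ne_empty_of_mem (mem_inter.2 ⟨hb, hall b⟩) (hdisj g hg hgE)

namespace IsHypertree

lemma card_inter_sup_le_one (hT : H.IsHypertree) (hE : PendantBuilt E) (hEH : E ⊆ H.edges)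
    {f : Finset W} (hf : f ∈ H.edges) (hfE : f ∉ E) : (f ∩ E.sup id).card ≤ 1 := by
  by_contra! h2
  obtain ⟨a, ha, b, hb, hab⟩ := one_lt_card.1 h2
  rw [mem_inter] at ha hb
  obtain ⟨_, _, _, hp⟩ := hE.bergeJoined ha.2 hb.2
  exact hT.2.2 (hp.hasBergeCycle hEH hf hfE ha.1 hb.1 hab)

lemma pendantBuilt_edges (hT : H.IsHypertree) (hne : ∀ f ∈ H.edges, f.Nonempty)
    (hH : H.edges.Nonempty) : PendantBuilt H.edges := by
  classical
  obtain ⟨E, hE, hmax⟩ := exists_max_image (H.edges.powerset.filter PendantBuilt) card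
    (hH.elim fun e he ↦ ⟨{e}, mem_filter.2 ⟨by simpa using he, PendantBuilt.single e⟩⟩)
  simp only [mem_filter, mem_powerset] at hE hmax
  obtain ⟨hEH, hE⟩ := hE
  by_cases hEq : E = H.edges
  · exact hEq ▸ hE
  obtain ⟨f, hf, hfE, hmeet⟩ :=
    hT.1.exists_edge_inter_sup_nonempty hne hE.nonempty (hEH.ssubset_of_ne hEq)
  obtain ⟨w, hw⟩ := card_eq_one.1
    (le_antisymm (hT.card_inter_sup_le_one hE hEH hf hfE) hmeet.card_pos)
  have := hmax (insert f E) ⟨insert_subset hf hEH, hE.attach hfE hw⟩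
  rw [card_insert_of_notMem hfE] at this
  omega

end IsHypertree

end FinHypergraph

lemma Finset.exists_bijOn_of_card_eq {α β : Type*} [Nonempty β] {s : Finset α} {t : Finset β}
    (h : s.card = t.card) : ∃ f : α → β, Set.BijOn f s t :=
  s.finite_toSet.exists_bijOn_of_encard_eq (by simp [h])

section Ramsey

variable {W α : Type*} (col : Finset α → Bool)

-- `true` is red and `false` is blue.
def IsRedClique (r : ℕ) (S : Finset α) : Prop :=
  ∀ c ⊆ S, c.card = r → col c = true

lemma isRedClique_empty {r : ℕ} (hr : r ≠ 0) : IsRedClique col r ∅ := fun c hc hcr ↦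
  (hr (by rw [← hcr, subset_empty.1 hc, card_empty])).elim

variable [DecidableEq W] [DecidableEq α]

structure IsBlueEmbedding (E : Finset (Finset W)) (φ : W → α) (A : Finset α) : Prop where
  injOn : Set.InjOn φ ↑(E.sup id)
  mapsTo : Set.MapsTo φ ↑(E.sup id) ↑A
  col_image : ∀ f ∈ E, col (f.image φ) = false

variable {col} {r : ℕ}

lemma IsRedClique.insert {X : Finset α} {x : α} (hX : IsRedClique col r X)
    (hx : ∀ B ⊆ X, B.card = r - 1 → col (insert x B) = true) :
    IsRedClique col r (insert x X) := by
  intro c hc hcr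
  by_cases hxc : x ∈ c
  · rw [← insert_erase hxc]
    exact hx _ (subset_insert_iff.1 hc) (by rw [card_erase_of_mem hxc, hcr])
  · exact hX c ((subset_insert_iff_of_notMem hxc).1 hc) hcr

variable {E : Finset (Finset W)} {A : Finset α}

lemma IsBlueEmbedding.mono {φ : W → α} {A' : Finset α} (hφ : IsBlueEmbedding col E φ A)
    (hA : A ⊆ A') : IsBlueEmbedding col E φ A' :=
  ⟨hφ.injOn, hφ.mapsTo.mono_right (coe_subset.2 hA), hφ.col_image⟩

lemma exists_isBlueEmbedding_singleton {e : Finset W} {c : Finset α} (hcA : c ⊆ A)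
    (hc : e.card = c.card) (hblue : col c = false) (hA : A.Nonempty) :
    ∃ φ, IsBlueEmbedding col {e} φ A := by
  have : Nonempty α := hA.to_type
  obtain ⟨φ, hφ⟩ := exists_bijOn_of_card_eq hc
  refine ⟨φ, ?_, ?_, fun f hf ↦ ?_⟩
  · simpa using hφ.injOn
  · simpa using hφ.mapsTo.mono_right (coe_subset.2 hcA)
  · rw [mem_singleton.1 hf, ← hblue]
    exact congrArg col (coe_injective (by rw [coe_image, hφ.image_eq]))

lemma IsBlueEmbedding.attach {ψ : W → α} (hψ : IsBlueEmbedding col E ψ A) {e : Finset W}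
    {w : W} (hw : e ∩ E.sup id = {w}) {B : Finset α} (hB : B ⊆ A \ (E.sup id).image ψ)
    (hBcard : B.card = (e.erase w).card) (hblue : col (insert (ψ w) B) = false) :
    ∃ φ, IsBlueEmbedding col (insert e E) φ A := by
  obtain ⟨hwe, hwE⟩ := mem_inter.1 (hw ▸ mem_singleton_self w)
  have : Nonempty α := ⟨ψ w⟩
  obtain ⟨η, hη⟩ := exists_bijOn_of_card_eq hBcard.symm
  obtain ⟨hBA, hBψ⟩ := subset_sdiff.1 hB
  have hdisj : Disjoint (e.erase w) (E.sup id) := by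
    rw [disjoint_iff_inter_eq_empty, erase_inter, hw, erase_singleton]
  have hsup : (insert e E).sup id = e.erase w ∪ E.sup id := by
    rw [sup_insert, id, sup_eq_union, ← insert_erase hwe, insert_union,
      erase_insert (notMem_erase w e), insert_eq_of_mem (mem_union_right _ hwE)]
  set φ := (e.erase w).piecewise η ψ
  have hφη : Set.EqOn φ η ↑(e.erase w) := fun z hz ↦ piecewise_eq_of_mem _ _ _ hz
  have hφψ : Set.EqOn φ ψ ↑(E.sup id) := fun z hz ↦
    piecewise_eq_of_notMem _ _ _ (disjoint_right.1 hdisj hz)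
  refine ⟨φ, ?_, ?_, fun f hf ↦ ?_⟩
  · rw [hsup, coe_union, Set.injOn_union (disjoint_coe.2 hdisj)]
    refine ⟨hη.injOn.congr hφη.symm, hψ.injOn.congr hφψ.symm, fun x hx y hy hxy ↦ ?_⟩
    rw [hφη hx, hφψ hy] at hxy
    exact disjoint_left.1 hBψ (hη.mapsTo hx) (hxy ▸ mem_image_of_mem ψ hy)
  · rw [hsup, coe_union]
    exact ((hη.mapsTo.congr hφη.symm).mono_right (coe_subset.2 hBA)).union
      (hψ.mapsTo.congr hφψ.symm)
  · obtain rfl | hf := mem_insert.1 hf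
    · have himage : (f.erase w).image φ = B := coe_injective (by
        rw [coe_image, Set.image_congr hφη, hη.image_eq])
      rw [← insert_erase hwe, image_insert, hφψ hwE, himage, hblue]
    · have hfE : f ⊆ E.sup id := le_sup (f := id) hf
      rw [image_congr (hφψ.mono (coe_subset.2 hfE))]
      exact hψ.col_image f hf

lemma IsBlueEmbedding.attach_or_isRedClique_insert {ψ : W → α} {X : Finset α}
    (hψ : IsBlueEmbedding col E ψ (A \ X)) {e : Finset W} {w : W} (hw : e ∩ E.sup id = {w})
    (he : e.card = r) (hXA : X ⊆ A) (hX : IsRedClique col r X) :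
    (∃ φ, IsBlueEmbedding col (insert e E) φ A) ∨
      ψ w ∈ A \ X ∧ IsRedClique col r (insert (ψ w) X) := by
  obtain ⟨hwe, hwE⟩ := mem_inter.1 (hw ▸ mem_singleton_self w)
  by_cases hB : ∃ B ⊆ A \ (E.sup id).image ψ, B.card = r - 1 ∧ col (insert (ψ w) B) = false
  · obtain ⟨B, hBA, hBcard, hblue⟩ := hB
    exact .inl <| (hψ.mono sdiff_subset).attach hw hBA
      (by rw [hBcard, card_erase_of_mem hwe, he]) hblue
  · push Not at hB
    refine .inr ⟨hψ.mapsTo hwE, hX.insert fun B hBX hBcard ↦ ?_⟩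
    refine Bool.not_eq_false _ ▸ hB B (subset_sdiff.2 ⟨hBX.trans hXA, ?_⟩) hBcard
    refine disjoint_left.2 fun x hxB hxψ ↦ ?_
    obtain ⟨z, hz, rfl⟩ := mem_image.1 hxψ
    exact (mem_sdiff.1 (hψ.mapsTo hz)).2 (hBX hxB)

lemma exists_isRedClique_or_isBlueEmbedding_insert {k : ℕ} {e : Finset W} {w : W}
    (hw : e ∩ E.sup id = {w}) (he : e.card = r)
    (ih : ∀ A' : Finset α, (k - 1) * E.card + 1 ≤ A'.card →
      (∃ S ⊆ A', S.card = k ∧ IsRedClique col r S) ∨ ∃ ψ, IsBlueEmbedding col E ψ A')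
    (hA : (k - 1) * (E.card + 1) + 1 ≤ A.card) :
    (∃ S ⊆ A, S.card = k ∧ IsRedClique col r S) ∨
      ∃ φ, IsBlueEmbedding col (insert e E) φ A := by
  have hr : r ≠ 0 := he ▸ card_ne_zero_of_mem (mem_inter.1 (hw ▸ mem_singleton_self w)).1
  suffices ∀ j ≤ k, ((∃ S ⊆ A, S.card = k ∧ IsRedClique col r S) ∨
      ∃ φ, IsBlueEmbedding col (insert e E) φ A) ∨
        ∃ X ⊆ A, X.card = j ∧ IsRedClique col r X by
    obtain h | ⟨X, hXA, hX, hred⟩ := this k le_rfl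
    · exact h
    · exact .inl ⟨X, hXA, hX, hred⟩
  intro j hj
  induction j with
  | zero => exact .inr ⟨∅, empty_subset A, card_empty, isRedClique_empty col hr⟩
  | succ j ihj =>
    obtain h | ⟨X, hXA, hXj, hX⟩ := ihj (by omega)
    · exact .inl h
    have hAX : (k - 1) * E.card + 1 ≤ (A \ X).card := by
      rw [card_sdiff_of_subset hXA, hXj]
      rw [Nat.mul_succ] at hA
      generalize (k - 1) * E.card = n at hA ⊢
      omega
    obtain ⟨S, hSA, hS, hred⟩ | ⟨ψ, hψ⟩ := ih (A \ X) hAX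
    · exact .inl (.inl ⟨S, hSA.trans sdiff_subset, hS, hred⟩)
    obtain h | ⟨hx, hred⟩ := hψ.attach_or_isRedClique_insert hw he hXA hX
    · exact .inl (.inr h)
    · obtain ⟨hxA, hxX⟩ := mem_sdiff.1 hx
      exact .inr ⟨_, insert_subset hxA hXA, by rw [card_insert_of_notMem hxX, hXj], hred⟩

theorem FinHypergraph.PendantBuilt.exists_isRedClique_or_isBlueEmbedding (hE : PendantBuilt E)
    {k : ℕ} (hu : ∀ e ∈ E, e.card = r) (hA : (k - 1) * E.card + 1 ≤ A.card) :
    (∃ S ⊆ A, S.card = k ∧ IsRedClique col r S) ∨ ∃ φ, IsBlueEmbedding col E φ A := by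
  induction hE generalizing A with
  | single e =>
    rw [card_singleton, mul_one] at hA
    obtain ⟨S, hSA, hS⟩ := exists_subset_card_eq (show k ≤ A.card by omega)
    by_cases hred : IsRedClique col r S
    · exact .inl ⟨S, hSA, hS, hred⟩
    simp only [IsRedClique, not_forall, Bool.not_eq_true] at hred
    obtain ⟨c, hcS, hc, hblue⟩ := hred
    exact .inr <| exists_isBlueEmbedding_singleton (hcS.trans hSA)
      (by rw [hc, hu e (mem_singleton_self e)]) hblue (card_pos.1 (by omega))
  | @attach E e w hE he hw ih =>
    rw [card_insert_of_notMem he] at hA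
    exact exists_isRedClique_or_isBlueEmbedding_insert hw (hu e (mem_insert_self e E))
      (fun A' hA' ↦ ih (fun f hf ↦ hu f (mem_insert_of_mem hf)) hA') hA

end Ramsey

section BlockColoring

variable {α β : Type*} [DecidableEq β]

def blockColoring (p : α → β) (c : Finset α) : Bool :=
  decide (2 ≤ (c.image p).card)

variable {p : α → β}

lemma IsRedClique.card_le_of_blockColoring {r : ℕ} {S : Finset α}
    (hS : IsRedClique (blockColoring p) r S) : S.card ≤ (r - 1) * (S.image p).card := by
  refine card_le_mul_card_image S (r - 1) fun q _ ↦ ?_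
  by_contra! hlt
  obtain ⟨c, hc, hcr⟩ := exists_subset_card_eq (show r ≤ #{a ∈ S | p a = q} by omega)
  have hcross := hS c (hc.trans (filter_subset _ _)) hcr
  have hsingle : (c.image p).card ≤ 1 := card_le_one.2 fun x hx y hy ↦ by
    obtain ⟨a, ha, rfl⟩ := mem_image.1 hx
    obtain ⟨b, hb, rfl⟩ := mem_image.1 hy
    exact (mem_filter.1 (hc ha)).2.trans (mem_filter.1 (hc hb)).2.symm
  simp only [blockColoring, decide_eq_true_eq] at hcross
  omega

lemma FinHypergraph.Connected.apply_eq_of_blockColoring [DecidableEq α] {W : Type*}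
    [DecidableEq W] {H : FinHypergraph W} (hH : H.Connected) {φ : W → α}
    (hφ : ∀ e ∈ H.edges, blockColoring p (e.image φ) = false) (u v : W) :
    p (φ v) = p (φ u) := by
  refine hH.mem_of_forall_adj (S := {z | p (φ z) = p (φ u)}) rfl ?_ v
  rintro x y hx ⟨e, he, hxe, hye⟩
  have h := hφ e he
  simp only [blockColoring, decide_eq_false_iff_not, not_le, image_image] at h
  exact (card_le_one.1 (by omega) _ (mem_image_of_mem (p ∘ φ) hye) _
    (mem_image_of_mem _ hxe)).trans (show p (φ x) = p (φ u) from hx)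

end BlockColoring

lemma Fin.card_filter_div_eq_le {N m : ℕ} (hm : 0 < m) (q : ℕ) :
    #{x : Fin N | x.val / m = q} ≤ m := by
  calc #{x : Fin N | x.val / m = q}
      ≤ #(range m) := by
        refine card_le_card_of_injOn (fun x ↦ x.val % m)
          (fun x _ ↦ by simpa using Nat.mod_lt _ hm) fun x hx y hy hxy ↦ Fin.ext ?_
        simp only [coe_filter, mem_univ, true_and] at hx hy hxy
        rw [← Nat.div_add_mod x m, ← Nat.div_add_mod y m, hx, hy, hxy]
    _ = m := card_range m

theorem exists_blockColoring_of_dvd {W : Type*} [DecidableEq W] {k r t : ℕ} (hk : 1 ≤ k)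
    (hr : 2 ≤ r) (ht : 1 ≤ t) (hdvd : (r - 1) ∣ (k - 1)) {H : FinHypergraph W}
    (hH : H.Connected) (hcard : (H.edges.sup id).card = (r - 1) * t + 1) :
    ∃ col : Finset (Fin ((k - 1) * t)) → Bool,
      (¬ ∃ S : Finset (Fin ((k - 1) * t)), S.card = k ∧ IsRedClique col r S) ∧
      ¬ ∃ φ : W → Fin ((k - 1) * t), Function.Injective φ ∧
        ∀ e ∈ H.edges, col (e.image φ) = false := by
  obtain ⟨s, hs⟩ := hdvd
  have hm : 0 < (r - 1) * t := Nat.mul_pos (by omega) ht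
  set p : Fin ((k - 1) * t) → ℕ := fun x ↦ x.val / ((r - 1) * t)
  refine ⟨blockColoring p, ?_, ?_⟩
  · rintro ⟨S, hS, hred⟩
    have himage : (S.image p).card ≤ s := by
      refine (card_le_card fun q hq ↦ ?_).trans (card_range s).le
      obtain ⟨x, -, rfl⟩ := mem_image.1 hq
      refine mem_range.2 (Nat.div_lt_of_lt_mul ?_)
      calc x.val < (k - 1) * t := x.isLt
        _ = (r - 1) * t * s := by rw [hs]; ring
    have := hred.card_le_of_blockColoring.trans (Nat.mul_le_mul_left (r - 1) himage)
    omega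
  · rintro ⟨φ, hφ, hblue⟩
    obtain ⟨z, -⟩ := card_pos.1 (show 0 < (H.edges.sup id).card by omega)
    have hsub : (H.edges.sup id).image φ ⊆ ({x | p x = p (φ z)} : Finset _) := fun x hx ↦ by
      obtain ⟨y, -, rfl⟩ := mem_image.1 hx
      simpa using hH.apply_eq_of_blockColoring hblue z y
    have := (card_le_card hsub).trans (Fin.card_filter_div_eq_le hm _)
    rw [card_image_of_injective _ hφ, hcard] at this
    omega

theorem stmt16_general (k r t : ℕ) (hk : 2 ≤ k) (hr : 2 ≤ r) (ht : 1 ≤ t)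
    (hdvd : (r - 1) ∣ (k - 1))
    {W : Type*} [DecidableEq W] (T : FinHypergraph W)
    (hT : T.IsHypertree) (hu : T.Uniform r) (hte : T.edges.card = t) :
    (∀ col : Finset (Fin ((k - 1) * t + 1)) → Bool,
      (∃ S : Finset (Fin ((k - 1) * t + 1)), S.card = k ∧
          ∀ e ⊆ S, e.card = r → col e = true) ∨
      (∃ φ : W → Fin ((k - 1) * t + 1), Function.Injective φ ∧
          ∀ e ∈ T.edges, col (e.image φ) = false)) ∧
    (∃ col : Finset (Fin ((k - 1) * t)) → Bool,
      (¬ ∃ S : Finset (Fin ((k - 1) * t)), S.card = k ∧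
          ∀ e ⊆ S, e.card = r → col e = true) ∧
      ¬ ∃ φ : W → Fin ((k - 1) * t), Function.Injective φ ∧
          ∀ e ∈ T.edges, col (e.image φ) = false) := by
  have hne : ∀ f ∈ T.edges, f.Nonempty := fun f hf ↦ card_pos.1 (by rw [hu f hf]; omega)
  have hE := hT.pendantBuilt_edges hne (card_pos.1 (by omega))
  have hcard : (T.edges.sup id).card = (r - 1) * t + 1 := by
    rw [hE.card_sup (by omega) hu, hte]
  obtain ⟨a, ha⟩ := card_pos.1 (show 0 < (T.edges.sup id).card by omega)
  refine ⟨fun col ↦ ?_, exists_blockColoring_of_dvd (by omega) hr ht hdvd hT.1 hcard⟩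
  obtain ⟨S, -, hS, hred⟩ | ⟨φ, hφ⟩ :=
    hE.exists_isRedClique_or_isBlueEmbedding (col := col) (A := univ) (k := k) hu (by simp [hte])
  · exact .inl ⟨S, hS, hred⟩
  · exact .inr ⟨φ, fun x y ↦ hφ.injOn (hT.1.mem_sup_edges ha x) (hT.1.mem_sup_edges ha y),
      hφ.col_image⟩

/-- If `r - 1` divides `k - 1`, then the `r`-uniform Ramsey number
`R(K_k^{(r)}, T)` equals `(k-1)t + 1` for every `r`-uniform hypertree `T` with `t`
edges: at `(k-1)t + 1` vertices every red-blue coloring (`true` = red) yields a red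
`K_k^{(r)}` or a blue copy of `T`, and at `(k-1)t` vertices some coloring has neither. -/
theorem stmt16 (k r t : ℕ) (hk : 2 ≤ k) (hr : 2 ≤ r) (ht : 1 ≤ t)
    (hdvd : (r - 1) ∣ (k - 1))
    {W : Type*} [Fintype W] [DecidableEq W] (T : FinHypergraph W)
    (hT : T.IsHypertree) (hu : T.Uniform r) (hte : T.edges.card = t) :
    (∀ col : Finset (Fin ((k - 1) * t + 1)) → Bool,
      (∃ S : Finset (Fin ((k - 1) * t + 1)), S.card = k ∧
          ∀ e ⊆ S, e.card = r → col e = true) ∨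
      (∃ φ : W → Fin ((k - 1) * t + 1), Function.Injective φ ∧
          ∀ e ∈ T.edges, col (e.image φ) = false)) ∧
    (∃ col : Finset (Fin ((k - 1) * t)) → Bool,
      (¬ ∃ S : Finset (Fin ((k - 1) * t)), S.card = k ∧
          ∀ e ⊆ S, e.card = r → col e = true) ∧
      ¬ ∃ φ : W → Fin ((k - 1) * t), Function.Injective φ ∧
          ∀ e ∈ T.edges, col (e.image φ) = false) :=
  stmt16_general k r t hk hr ht hdvd T hT hu hte
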